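/- arXiv:2202.11346 — 6 statements merged into one kernel-verified Lean document; each statement's English description precedes it below -/
import Mathlib

section
/- Let I be a subset of the real interval [0,1] that satisfies the descending chain condition. Then the set I_+ := {0} ∪ { i_1 + i_2 + ... + i_ℓ : ℓ ≥ 1 and i_1, ..., i_ℓ ∈ I } also satisfies the descending chain condition. -/
/-- A set of real numbers satisfies the descending chain condition (DCC) if it
contains no infinite strictly decreasing sequence. -/
def SatisfiesDCC (S : Set ℝ) : Prop :=
  ¬ ∃ f : ℕ → ℝ, (∀ n, f n ∈ S) ∧ ∀ n, f (n + 1) < f n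

/-- For `I ⊆ [0,1]`, the set `I_+` of `0` together with all finite sums of
elements of `I`. -/
def IPlus (I : Set ℝ) : Set ℝ :=
  {0} ∪ {j | ∃ ℓ : ℕ, 0 < ℓ ∧ ∃ i : Fin ℓ → ℝ, (∀ p, i p ∈ I) ∧ j = ∑ p, i p}

theorem IPlus_satisfiesDCC (I : Set ℝ) (hI : I ⊆ Set.Icc 0 1)
    (hDCC : SatisfiesDCC I) : SatisfiesDCC (IPlus I) := by
  have hWF : I.IsWF := by
    rw [Set.isWF_iff_no_descending_seq]
    intro f hf hmem
    exact hDCC ⟨f, hmem, fun n => hf (Nat.lt_succ_self n)⟩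
  have hPWO : I.IsPWO := hWF.isPWO
  have hclo : Set.IsPWO (AddSubmonoid.closure I : Set ℝ) :=
    hPWO.addSubmonoid_closure (fun x hx => (hI hx).1)
  have hsub : IPlus I ⊆ (AddSubmonoid.closure I : Set ℝ) := by
    rintro x (rfl | ⟨ℓ, -, i, hi, rfl⟩)
    · exact AddSubmonoid.zero_mem _
    · exact sum_mem fun p _ => AddSubmonoid.subset_closure (hi p)
  have hWF' : (IPlus I).IsWF := (hclo.isWF).mono hsub
  rw [Set.isWF_iff_no_descending_seq] at hWF'
  rintro ⟨f, hmem, hlt⟩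
  exact hWF' f (strictAnti_nat_of_succ_lt hlt) hmem
end

section
/- Let I be a subset of the real interval [0,1] that satisfies the descending chain condition. Then the set D(I) := { a ∈ ℝ : a ≤ 1 and a = (m − 1 + f)/m for some positive integer m and some f ∈ I_+ } also satisfies the descending chain condition. -/
/-- `D(I) = { a ≤ 1 : a = (m - 1 + f)/m, m ∈ ℕ⁺, f ∈ I_+ }`. -/
def DSet (I : Set ℝ) : Set ℝ :=
  {a | a ≤ 1 ∧ ∃ m : ℕ, 0 < m ∧ ∃ f ∈ IPlus I, a = ((m : ℝ) - 1 + f) / m}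
/-!
Write `a = (m - 1 + f)/m` as `1 - (1 - f)/m`. Since `f ≥ 0`, an element `a < y < 1` of `D(I)`
has `m ≤ 1/(1 - y)`, so `D(I) ∩ (-∞, y)` lies in finitely many monotone images of `I_+`; and
`I_+` is well-founded, being inside the additive closure of a well-founded set of nonnegative
reals. As `D(I) ⊆ (-∞, 1]`, every descending chain in `D(I)` eventually lies below some `y < 1`.
-/

open Set

lemma satisfiesDCC_iff_isWF (S : Set ℝ) : SatisfiesDCC S ↔ S.IsWF := by
  rw [isWF_iff_no_descending_seq, SatisfiesDCC, not_exists]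
  refine forall_congr' fun f => ⟨fun h hf hS => h ⟨hS, fun n => hf n.lt_succ_self⟩, ?_⟩
  rintro h ⟨hS, hf⟩
  exact h (strictAnti_nat_of_succ_lt hf) hS

theorem Set.IsWF.of_forall_inter_Iio {α : Type*} [Preorder α] {S : Set α}
    (h : ∀ x ∈ S, (S ∩ Iio x).IsWF) : S.IsWF := by
  rw [isWF_iff_no_descending_seq]
  intro f hf hS
  exact isWF_iff_no_descending_seq.1 (h (f 0) (hS 0)) (f ∘ Nat.succ)
    (hf.comp_strictMono fun _ _ => Nat.succ_lt_succ)
    fun n => ⟨hS _, hf n.succ_pos⟩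

lemma IPlus_subset_addSubmonoidClosure (I : Set ℝ) :
    IPlus I ⊆ (AddSubmonoid.closure I : Set ℝ) := by
  rintro x (rfl | ⟨ℓ, -, i, hi, rfl⟩)
  · exact zero_mem _
  · exact sum_mem fun p _ => AddSubmonoid.subset_closure (hi p)

lemma IPlus_subset_Ici {I : Set ℝ} (hI : I ⊆ Ici 0) : IPlus I ⊆ Ici 0 := by
  rintro x (rfl | ⟨ℓ, -, i, hi, rfl⟩)
  · exact self_mem_Ici
  · exact Finset.sum_nonneg fun p _ => mem_Ici.1 (hI (hi p))

lemma IPlus_isWF {I : Set ℝ} (hI : I ⊆ Ici 0) (hwf : I.IsWF) : (IPlus I).IsWF :=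
  ((hwf.isPWO.addSubmonoid_closure hI).mono
    (IPlus_subset_addSubmonoidClosure I)).isWF

lemma DSet_inter_Iio_subset {I : Set ℝ} (hI : I ⊆ Ici 0) {y : ℝ} (hy : y < 1) :
    DSet I ∩ Iio y ⊆
      ⋃ m ∈ Finset.range (⌊1 / (1 - y)⌋₊ + 1), (fun f => ((m : ℝ) - 1 + f) / m) '' IPlus I := by
  rintro a ⟨⟨-, m, hm, f, hf, rfl⟩, hay⟩
  refine mem_biUnion (x := m) ?_ ⟨f, hf, rfl⟩
  have hm' : (0 : ℝ) < m := Nat.cast_pos.2 hm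
  have hgap : m * (1 - ((m : ℝ) - 1 + f) / m) = 1 - f := by field_simp; ring
  have hf0 : 0 ≤ f := IPlus_subset_Ici hI hf
  rw [Finset.coe_range, mem_Iio, Nat.lt_succ_iff, Nat.le_floor_iff (by positivity),
    le_div_iff₀ (by linarith)]
  linarith [mul_lt_mul_of_pos_left (mem_Iio.1 hay) hm']

lemma DSet_inter_Iio_isWF {I : Set ℝ} (hI : I ⊆ Ici 0) (hwf : I.IsWF) {y : ℝ} (hy : y < 1) :
    (DSet I ∩ Iio y).IsWF := by
  refine IsWF.mono ?_ (DSet_inter_Iio_subset hI hy)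
  rw [← Finset.sup_set_eq_biUnion, Finset.isWF_sup]
  intro m _
  exact ((IPlus_isWF hI hwf).isPWO.image_of_monotone fun f g hfg => by gcongr).isWF

theorem DSet_satisfiesDCC (I : Set ℝ) (hI : I ⊆ Set.Icc 0 1)
    (hDCC : SatisfiesDCC I) : SatisfiesDCC (DSet I) := by
  rw [satisfiesDCC_iff_isWF] at hDCC ⊢
  have hI₀ : I ⊆ Ici 0 := hI.trans Icc_subset_Ici_self
  have hlt : (DSet I ∩ Iio 1).IsWF := IsWF.of_forall_inter_Iio fun y hy =>
    (DSet_inter_Iio_isWF hI₀ hDCC hy.2).mono (inter_subset_inter_left _ inter_subset_left)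
  refine (hlt.insert 1).mono fun a ha => ?_
  rcases ha.1.eq_or_lt with rfl | h
  · exact mem_insert _ _
  · exact mem_insert_of_mem _ ⟨ha, h⟩
end

section
/- Fix a subset I of the real interval [0,1] satisfying the descending chain condition and a positive real number α. Then there exists a finite subset I_0 ⊆ I, depending only on I and α, with the following property: whenever ℓ is a positive integer, k_1, ..., k_ℓ are positive integers, and i_1, ..., i_ℓ are elements of I \ {0} such that Σ_{j=1}^ℓ k_j · i_j = α, then i_j ∈ I_0 for all j = 1, ..., ℓ. -/
/-!
Since `I` is well-ordered and nonnegative, its closure under addition is partially well-ordered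
(Higman's lemma, in the form `Set.IsPWO.addSubmonoid_closure`). Every `i_j` is a summand of `α`
whose complement `α - i_j = (k_j - 1) i_j + ∑_{j' ≠ j} k_{j'} i_{j'}` lies in that closure, and
the pairs `(x, t)` with `x ∈ I`, `t` in the closure and `x + t = α` are finitely many, since an
infinite family of them would contain two distinct pairs with `x ≤ x'` and `t ≤ t'`.
-/

theorem SatisfiesDCC.isWF {S : Set ℝ} (h : SatisfiesDCC S) : S.IsWF :=
  Set.isWF_iff_no_descending_seq.2 fun f hf hS =>
    h ⟨f, hS, fun n => hf (Nat.lt_succ_self n)⟩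

theorem Set.IsPWO.finite_setOf_add_mem_closure_eq {α : Type*} [AddCommMonoid α] [PartialOrder α]
    [IsOrderedCancelAddMonoid α] {s : Set α} (hs : s.IsPWO) (hpos : ∀ x ∈ s, 0 ≤ x) (a : α) :
    {x ∈ s | ∃ t ∈ AddSubmonoid.closure s, x + t = a}.Finite :=
  ((Set.AddAntidiagonal.finite_of_isPWO hs (hs.addSubmonoid_closure hpos) a).image Prod.fst).subset
    fun x ⟨hx, t, ht, hxt⟩ => ⟨(x, t), ⟨hx, ht, hxt⟩, rfl⟩

theorem exists_mem_closure_sum_nsmul_eq_add {M ι : Type*} [AddCommMonoid M] [Fintype ι]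
    {s : Set M} {k : ι → ℕ} {v : ι → M} (hv : ∀ j, v j ∈ s) {j : ι} (hk : k j ≠ 0) :
    ∃ t ∈ AddSubmonoid.closure s, ∑ j', k j' • v j' = v j + t := by
  classical
  obtain ⟨m, hm⟩ := Nat.exists_eq_succ_of_ne_zero hk
  have hmem : ∀ j' (n : ℕ), n • v j' ∈ AddSubmonoid.closure s :=
    fun j' n => nsmul_mem (AddSubmonoid.subset_closure (hv j')) n
  refine ⟨m • v j + ∑ j' ∈ Finset.univ.erase j, k j' • v j',
    add_mem (hmem j m) (sum_mem fun j' _ => hmem j' (k j')), ?_⟩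
  rw [← Finset.add_sum_erase _ _ (Finset.mem_univ j), hm, succ_nsmul', add_assoc]

theorem finite_subset_of_sum_eq_general (I : Set ℝ) (hI : I ⊆ Set.Icc 0 1)
    (hDCC : SatisfiesDCC I) (α : ℝ) :
    ∃ I₀ : Set ℝ, I₀ ⊆ I ∧ I₀.Finite ∧
      ∀ (ℓ : ℕ), 0 < ℓ → ∀ (k : Fin ℓ → ℕ) (i : Fin ℓ → ℝ),
        (∀ j, 0 < k j) → (∀ j, i j ∈ I) → (∀ j, i j ≠ 0) →
        (∑ j, (k j : ℝ) * i j) = α → ∀ j, i j ∈ I₀ := by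
  refine ⟨{x ∈ I | ∃ t ∈ AddSubmonoid.closure I, x + t = α}, fun x hx => hx.1,
    hDCC.isWF.isPWO.finite_setOf_add_mem_closure_eq (fun x hx => (hI hx).1) α, ?_⟩
  intro ℓ _ k i hk hiI _ hsum j
  obtain ⟨t, ht, hsplit⟩ := exists_mem_closure_sum_nsmul_eq_add hiI (hk j).ne'
  simp only [nsmul_eq_mul] at hsplit
  exact ⟨hiI j, t, ht, hsplit ▸ hsum⟩

theorem finite_subset_of_sum_eq (I : Set ℝ) (hI : I ⊆ Set.Icc 0 1)
    (hDCC : SatisfiesDCC I) (α : ℝ) (hα : 0 < α) :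
    ∃ I₀ : Set ℝ, I₀ ⊆ I ∧ I₀.Finite ∧
      ∀ (ℓ : ℕ), 0 < ℓ → ∀ (k : Fin ℓ → ℕ) (i : Fin ℓ → ℝ),
        (∀ j, 0 < k j) → (∀ j, i j ∈ I) → (∀ j, i j ≠ 0) →
        (∑ j, (k j : ℝ) * i j) = α → ∀ j, i j ∈ I₀ :=
  finite_subset_of_sum_eq_general I hI hDCC α
end

section
/- Let M be an n × n real symmetric negative definite matrix whose off-diagonal entries are all nonnegative (M_{ij} ≥ 0 for all i ≠ j). Let a ∈ ℝ^n be a vector such that (M a)_j ≥ 0 for every index j. Then a_i ≤ 0 for every index i. -/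
open Matrix

theorem neg_entries_of_negDef_mulVec_nonneg {n : ℕ}
    (M : Matrix (Fin n) (Fin n) ℝ) (hSymm : M.IsSymm)
    (hNegDef : ∀ x : Fin n → ℝ, x ≠ 0 → x ⬝ᵥ M.mulVec x < 0)
    (hOffDiag : ∀ i j : Fin n, i ≠ j → 0 ≤ M i j)
    (a : Fin n → ℝ) (ha : ∀ j, 0 ≤ M.mulVec a j) :
    ∀ i, a i ≤ 0 := by
  set p : Fin n → ℝ := fun i => max (a i) 0 with hp
  have hp0 : ∀ i, 0 ≤ p i := fun i => le_max_right _ _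
  have hpa : ∀ i, 0 ≤ p i - a i := fun i => sub_nonneg.2 (le_max_left _ _)
  have hdiag : ∀ i, p i * (p i - a i) = 0 := by
    intro i
    rcases le_or_gt 0 (a i) with h | h
    · simp [hp, max_eq_left h]
    · simp [hp, max_eq_right h.le]
  have h1 : 0 ≤ p ⬝ᵥ M.mulVec a :=
    Finset.sum_nonneg fun j _ => mul_nonneg (hp0 j) (ha j)
  have h2 : 0 ≤ p ⬝ᵥ M.mulVec (p - a) := by
    simp only [dotProduct, Matrix.mulVec]
    apply Finset.sum_nonneg
    intro i _
    rw [Finset.mul_sum]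
    apply Finset.sum_nonneg
    intro j _
    rcases eq_or_ne i j with rfl | hij
    · have : p i * (M i i * (p - a) i) = M i i * (p i * (p i - a i)) := by
        simp [Pi.sub_apply]; ring
      rw [this, hdiag i, mul_zero]
    · exact mul_nonneg (hp0 i)
        (mul_nonneg (hOffDiag i j hij) (by simpa [Pi.sub_apply] using hpa j))
  have key : 0 ≤ p ⬝ᵥ M.mulVec p := by
    have hsplit : p = a + (p - a) := by ext i; simp
    calc (0:ℝ) ≤ p ⬝ᵥ M.mulVec a + p ⬝ᵥ M.mulVec (p - a) := add_nonneg h1 h2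
      _ = p ⬝ᵥ M.mulVec p := by
          rw [← dotProduct_add, ← Matrix.mulVec_add, ← hsplit]
  have hpz : p = 0 := by
    by_contra hne
    exact absurd (hNegDef p hne) (not_lt.2 key)
  intro i
  exact (le_max_left (a i) 0).trans_eq (congrFun hpz i)
end

section
/- Let M be an n × n real symmetric negative definite matrix whose off-diagonal entries are all nonnegative (M_{ij} ≥ 0 for all i ≠ j), and suppose M is irreducible in the sense that the graph on {1, ..., n} with an edge between i and j whenever i ≠ j and M_{ij} > 0 is connected. Let a ∈ ℝ^n satisfy (M a)_j ≥ 0 for every index j. Then either a_i = 0 for all i, or a_i < 0 for all i. -/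
open Matrix

theorem negativity_lemma_connected {n : ℕ}
    (M : Matrix (Fin n) (Fin n) ℝ) (hSymm : M.IsSymm)
    (hNegDef : ∀ x : Fin n → ℝ, x ≠ 0 → x ⬝ᵥ M.mulVec x < 0)
    (hOffDiag : ∀ i j : Fin n, i ≠ j → 0 ≤ M i j)
    (hConn : ∀ i j : Fin n,
      Relation.ReflTransGen (fun p q => p ≠ q ∧ 0 < M p q) i j)
    (a : Fin n → ℝ) (ha : ∀ j, 0 ≤ M.mulVec a j) :
    (∀ i, a i = 0) ∨ (∀ i, a i < 0) := by
  set p : Fin n → ℝ := fun i => max (a i) 0 with hp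
  have hp0 : ∀ i, 0 ≤ p i := fun i => le_max_right _ _
  have hq0 : ∀ i, 0 ≤ p i - a i := fun i => by
    simp [hp, sub_nonneg, le_max_left]
  have hpq : ∀ i, p i * (p i - a i) = 0 := by
    intro i
    rcases le_or_gt (a i) 0 with h | h
    · simp [hp, max_eq_right h]
    · simp [hp, max_eq_left h.le]
  have hale : ∀ i, a i ≤ 0 := by
    by_contra hcon
    push_neg at hcon
    obtain ⟨i0, hi0⟩ := hcon
    have hpne : p ≠ 0 := by
      intro h
      have h2 := congrFun h i0
      have h3 : p i0 = a i0 := max_eq_left hi0.le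
      simp only [Pi.zero_apply] at h2
      rw [h3] at h2
      exact absurd h2 (ne_of_gt hi0)
    have hlt := hNegDef p hpne
    have h1 : 0 ≤ p ⬝ᵥ M.mulVec a := by
      apply Finset.sum_nonneg
      intro j _
      exact mul_nonneg (hp0 j) (ha j)
    have h2 : 0 ≤ p ⬝ᵥ M.mulVec (fun i => p i - a i) := by
      unfold dotProduct Matrix.mulVec
      apply Finset.sum_nonneg
      intro i _
      simp only [dotProduct]
      rw [Finset.mul_sum]
      apply Finset.sum_nonneg
      intro j _
      rcases eq_or_ne i j with rfl | hne
      · have h4 : p i * (M i i * (p i - a i)) = M i i * (p i * (p i - a i)) := by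
          ring
        rw [h4, hpq i, mul_zero]
      · exact mul_nonneg (hp0 i) (mul_nonneg (hOffDiag i j hne) (hq0 j))
    have hsplit : p ⬝ᵥ M.mulVec p
        = p ⬝ᵥ M.mulVec a + p ⬝ᵥ M.mulVec (fun i => p i - a i) := by
      have hpa : p = a + fun i => p i - a i := by
        funext i
        simp only [Pi.add_apply]
        ring
      rw [← dotProduct_add, ← Matrix.mulVec_add, ← hpa]
    rw [hsplit] at hlt
    linarith
  have hzero : ∀ b c : Fin n, a b = 0 → b ≠ c → 0 < M b c → a c = 0 := by
    intro b c hb hbc hMbc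
    have hsum := ha b
    simp only [Matrix.mulVec, dotProduct] at hsum
    have hle : ∀ k ∈ Finset.univ, M b k * a k ≤ 0 := by
      intro k _
      rcases eq_or_ne b k with rfl | hne
      · simp [hb]
      · exact mul_nonpos_of_nonneg_of_nonpos (hOffDiag b k hne) (hale k)
    have hsum0 : ∑ k, M b k * a k = 0 :=
      le_antisymm (Finset.sum_nonpos hle) hsum
    have h5 := (Finset.sum_eq_zero_iff_of_nonpos hle).mp hsum0 c (Finset.mem_univ c)
    rcases mul_eq_zero.mp h5 with h | h
    · exact absurd h hMbc.ne'
    · exact h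
  by_cases hall : ∀ i, a i = 0
  · exact Or.inl hall
  · right
    push_neg at hall
    obtain ⟨i0, hi0⟩ := hall
    intro j
    rcases lt_or_eq_of_le (hale j) with h | h
    · exact h
    · exfalso
      have hprop : ∀ x y : Fin n,
          Relation.ReflTransGen (fun p q => p ≠ q ∧ 0 < M p q) x y →
          a x = 0 → a y = 0 := by
        intro x y hxy
        induction hxy with
        | refl => exact id
        | tail _ step ih => exact fun hx => hzero _ _ (ih hx) step.1 step.2
      exact hi0 (hprop j i0 (hConn j i0) h)
end

section
/- Let M be an n × n real symmetric negative definite matrix whose off-diagonal entries are all nonnegative (M_{ij} ≥ 0 for all i ≠ j), and suppose the graph on {1, ..., n} with an edge between i and j whenever i ≠ j and M_{ij} > 0 is connected. Let a ∈ ℝ^n satisfy (M a)_j ≥ 0 for every index j, and suppose moreover that (M a)_{j₀} > 0 for some index j₀. Then a_i < 0 for every index i. -/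
open Matrix

theorem negativity_lemma_connected_strict {n : ℕ}
    (M : Matrix (Fin n) (Fin n) ℝ) (hSymm : M.IsSymm)
    (hNegDef : ∀ x : Fin n → ℝ, x ≠ 0 → x ⬝ᵥ M.mulVec x < 0)
    (hOffDiag : ∀ i j : Fin n, i ≠ j → 0 ≤ M i j)
    (hConn : ∀ i j : Fin n,
      Relation.ReflTransGen (fun p q => p ≠ q ∧ 0 < M p q) i j)
    (a : Fin n → ℝ) (ha : ∀ j, 0 ≤ M.mulVec a j)
    (hstrict : ∃ j₀, 0 < M.mulVec a j₀) :
    ∀ i, a i < 0 := by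
  -- Step 1: a i ≤ 0 for all i
  have hle : ∀ i, a i ≤ 0 := by
    by_contra h
    push_neg at h
    set x : Fin n → ℝ := fun i => max (a i) 0 with hx
    have hxnonneg : ∀ i, 0 ≤ x i := fun i => le_max_right _ _
    have hxne : x ≠ 0 := by
      obtain ⟨i, hi⟩ := h
      intro h0
      have h1 := congrFun h0 i
      simp only [hx, Pi.zero_apply] at h1
      have : a i ≤ 0 := by
        rw [← h1]; exact le_max_left _ _
      linarith
    have h1 : 0 ≤ x ⬝ᵥ M.mulVec a := by
      apply Finset.sum_nonneg
      intro i _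
      exact mul_nonneg (hxnonneg i) (ha i)
    have h2 : 0 ≤ x ⬝ᵥ M.mulVec (x - a) := by
      rw [dotProduct]
      apply Finset.sum_nonneg
      intro i _
      rw [mulVec, dotProduct, Finset.mul_sum]
      apply Finset.sum_nonneg
      intro j _
      by_cases hij : i = j
      · subst hij
        by_cases hai : 0 ≤ a i
        · have : (x - a) i = 0 := by
            simp [hx, max_eq_left hai]
          rw [this]; ring_nf; simp
        · have : x i = 0 := by
            simp [hx, max_eq_right (le_of_not_ge hai)]
          rw [this]; ring_nf; simp
      · have hxa : 0 ≤ (x - a) j := by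
          simp only [Pi.sub_apply, hx]
          have := le_max_left (a j) 0
          linarith
        exact mul_nonneg (hxnonneg i) (mul_nonneg (hOffDiag i j hij) hxa)
    have h3 : x ⬝ᵥ M.mulVec x = x ⬝ᵥ M.mulVec a + x ⬝ᵥ M.mulVec (x - a) := by
      rw [Matrix.mulVec_sub, dotProduct_sub]
      ring
    have h4 : 0 ≤ x ⬝ᵥ M.mulVec x := by rw [h3]; linarith
    exact absurd (hNegDef x hxne) (not_lt.mpr h4)
  -- Step 2: zeros propagate along the graph
  have hzero : ∀ p q : Fin n,
      Relation.ReflTransGen (fun p q => p ≠ q ∧ 0 < M p q) p q →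
      a p = 0 → a q = 0 := by
    intro p q hpq
    induction hpq with
    | refl => exact fun h => h
    | @tail b c _ hstep ih =>
      intro hp
      have hb : a b = 0 := ih hp
      obtain ⟨hne, hM⟩ := hstep
      have hterm : ∀ j ∈ Finset.univ, M b j * a j ≤ 0 := by
        intro j _
        by_cases hj : b = j
        · subst hj; rw [hb]; simp
        · exact mul_nonpos_of_nonneg_of_nonpos (hOffDiag b j hj) (hle j)
      have hsum : (∑ j, M b j * a j) ≤ 0 := Finset.sum_nonpos hterm
      have hsum0 : (∑ j, M b j * a j) = 0 := by
        have := ha b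
        rw [mulVec, dotProduct] at this
        linarith
      have heach := (Finset.sum_eq_zero_iff_of_nonpos hterm).mp hsum0
      have hc : M b c * a c = 0 := heach c (Finset.mem_univ c)
      rcases mul_eq_zero.mp hc with h | h
      · exact absurd h (ne_of_gt hM)
      · exact h
  -- Conclusion
  intro i
  by_contra hi
  have hai : a i = 0 := le_antisymm (hle i) (not_lt.mp hi)
  have hall : ∀ q, a q = 0 := fun q => hzero i q (hConn i q) hai
  have ha0 : a = 0 := funext hall
  obtain ⟨j₀, hj₀⟩ := hstrict
  rw [ha0] at hj₀
  simp [Matrix.mulVec_zero] at hj₀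
end
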